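/- arXiv:1602.04570 — 3 statements merged into one kernel-verified Lean document; each statement's English description precedes it below -/
import Mathlib

section
/- Let 0 < γ < 1. There exists a constant C_γ such that for every Schwartz function f on ℝ, the fractional Laplacian admits the singular integral representation (-Δ)^{γ/2} f(x) = C_γ ∫_ℝ (f(x) - f(y))/|x - y|^{1+γ} dy. Moreover ‖(-Δ)^{γ/2} f‖_{L∞} ≲ ‖f‖_{L∞} + ‖f'‖_{L∞}. -/
/-!
With `K_γ = ∫ (1 - cos 2πu) / |u|^{1+γ} du ∈ (0, ∞)`, the substitution `u = ξh` gives
`|ξ|^γ = K_γ⁻¹ ∫ (1 - cos 2πξh) / |h|^{1+γ} dh`. Inserting this into the Fourier multiplier,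
Fubini (justified by `∫ |ξ|^γ |𝓕f ξ| dξ < ∞`) and Fourier inversion turn the `ξ`-integral of
`(1 - cos 2πξh) 𝓕f(ξ) e^{2πiξx}` into the second difference `f x - (f (x+h) + f (x-h)) / 2`;
symmetrising in `h` gives the singular integral with `C_γ = (2π)^γ / K_γ`. The `L∞` bound comes
from `|f x - f y| ≤ min (2‖f‖_∞, ‖f'‖_∞ |x - y|)`, which makes the singular integrand dominated by
the integrable `min (|x-y|^{-γ}, |x-y|^{-1-γ})`.
-/

open MeasureTheory Real

/-- The fractional Laplacian `(-Δ)^{γ/2}` defined via the Fourier multiplier `(2π|ξ|)^γ`. -/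
noncomputable def fracLap (γ : ℝ) (f : ℝ → ℂ) (x : ℝ) : ℂ :=
  ∫ ξ : ℝ, ((2 * π * |ξ|) ^ γ : ℝ) •
    (FourierTransform.fourier f ξ * Complex.exp (((2 * π * ξ * x : ℝ) : ℂ) * Complex.I))

open Set Function FourierTransform SchwartzMap

lemma integrable_comp_abs_of_integrableOn_Ioi {E : Type*} [NormedAddCommGroup E] {g : ℝ → E}
    (hg : IntegrableOn g (Ioi 0)) : Integrable fun t => g |t| := by
  have hIoi : IntegrableOn (fun t => g |t|) (Ioi 0) :=
    hg.congr_fun (fun t ht => by rw [abs_of_pos ht]) measurableSet_Ioi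
  have hIic : IntegrableOn (fun t => g |t|) (Iic 0) := by
    have hneg : MeasurableEmbedding fun t : ℝ => -t := (Homeomorph.neg ℝ).measurableEmbedding
    rw [← Measure.map_neg_eq_self (volume : Measure ℝ), hneg.integrableOn_map_iff]
    simp_rw [Function.comp_def, abs_neg, neg_preimage, neg_Iic, neg_zero]
    exact Iff.mpr integrableOn_Ici_iff_integrableOn_Ioi hIoi
  rw [← integrableOn_univ, ← Iic_union_Ioi (a := (0 : ℝ))]
  exact hIic.union hIoi

lemma integrable_min_rpow_abs {a b : ℝ} (ha : -1 < a) (hb : b < -1) :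
    Integrable fun t : ℝ => min (|t| ^ a) (|t| ^ b) := by
  refine integrable_comp_abs_of_integrableOn_Ioi (g := fun t => min (t ^ a) (t ^ b)) ?_
  have hmeas : AEStronglyMeasurable (fun t : ℝ => min (t ^ a) (t ^ b)) := by
    apply Measurable.aestronglyMeasurable; fun_prop
  have hnonneg {t : ℝ} (ht : 0 < t) : ‖min (t ^ a) (t ^ b)‖ = min (t ^ a) (t ^ b) :=
    norm_of_nonneg (le_min (rpow_nonneg ht.le _) (rpow_nonneg ht.le _))
  rw [← Ioc_union_Ioi_eq_Ioi zero_le_one]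
  refine IntegrableOn.union ?_ ?_
  · refine Integrable.mono' ((intervalIntegrable_iff_integrableOn_Ioc_of_le zero_le_one).mp
      (intervalIntegral.intervalIntegrable_rpow' ha)) hmeas.restrict ?_
    filter_upwards [ae_restrict_mem measurableSet_Ioc] with t ht
    exact (hnonneg ht.1).trans_le (min_le_left _ _)
  · refine Integrable.mono' (integrableOn_Ioi_rpow_of_lt hb one_pos) hmeas.restrict ?_
    filter_upwards [ae_restrict_mem measurableSet_Ioi] with t ht
    exact (hnonneg (one_pos.trans ht)).trans_le (min_le_right _ _)

noncomputable def cosKernel (γ ξ h : ℝ) : ℝ := (1 - cos (2 * π * ξ * h)) / |h| ^ (1 + γ)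

lemma cosKernel_nonneg (γ ξ h : ℝ) : 0 ≤ cosKernel γ ξ h :=
  div_nonneg (by linarith [cos_le_one (2 * π * ξ * h)]) (rpow_nonneg (abs_nonneg h) _)

lemma cosKernel_eq_mul_cosKernel_one (γ : ℝ) {ξ : ℝ} (hξ : ξ ≠ 0) (h : ℝ) :
    cosKernel γ ξ h = |ξ| ^ (1 + γ) * cosKernel γ 1 (ξ * h) := by
  rcases eq_or_ne h 0 with rfl | hh
  · simp [cosKernel]
  have hξγ : |ξ| ^ (1 + γ) ≠ 0 := (rpow_pos_of_pos (abs_pos.2 hξ) _).ne'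
  have hhγ : |h| ^ (1 + γ) ≠ 0 := (rpow_pos_of_pos (abs_pos.2 hh) _).ne'
  rw [cosKernel, cosKernel, abs_mul, mul_rpow (abs_nonneg ξ) (abs_nonneg h)]
  field_simp

lemma cosKernel_one_le (γ h : ℝ) :
    cosKernel γ 1 h ≤ 2 * π ^ 2 * min (|h| ^ (1 - γ)) (|h| ^ (-(1 + γ))) := by
  rcases eq_or_ne h 0 with rfl | hh
  · simpa [cosKernel] using mul_nonneg (by positivity)
      (le_min (rpow_nonneg le_rfl (1 - γ)) (rpow_nonneg le_rfl (-(1 + γ))))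
  have hd : 0 < |h| ^ (1 + γ) := rpow_pos_of_pos (abs_pos.2 hh) _
  have hsq : |h| ^ (1 - γ) * |h| ^ (1 + γ) = h ^ 2 := by
    rw [← rpow_add (abs_pos.2 hh), show 1 - γ + (1 + γ) = ((2 : ℕ) : ℝ) by norm_num, rpow_natCast,
      sq_abs]
  have hinv : |h| ^ (-(1 + γ)) * |h| ^ (1 + γ) = 1 := by
    rw [rpow_neg (abs_nonneg h), inv_mul_cancel₀ hd.ne']
  have hcos_sq := one_sub_sq_div_two_le_cos (x := 2 * π * 1 * h)
  have hcos_two := neg_one_le_cos (2 * π * 1 * h)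
  have hπ : 2 ≤ 2 * π ^ 2 := by nlinarith [pi_gt_three]
  rw [cosKernel, div_le_iff₀ hd, mul_min_of_nonneg _ _ (by positivity),
    min_mul_of_nonneg _ _ hd.le, mul_assoc (2 * π ^ 2), mul_assoc (2 * π ^ 2), hsq, hinv]
  refine le_min (by nlinarith) (by nlinarith)

lemma integrable_cosKernel_one {γ : ℝ} (h0 : 0 < γ) (h2 : γ < 2) :
    Integrable (cosKernel γ 1) := by
  have hmin := integrable_min_rpow_abs (a := 1 - γ) (b := -(1 + γ)) (by linarith) (by linarith)
  have hmeas : AEStronglyMeasurable (cosKernel γ 1) := by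
    unfold cosKernel; apply Measurable.aestronglyMeasurable; fun_prop
  refine (hmin.const_mul (2 * π ^ 2)).mono' hmeas (ae_of_all _ fun h => ?_)
  rw [norm_of_nonneg (cosKernel_nonneg γ 1 h)]
  exact cosKernel_one_le γ h

lemma integrable_cosKernel {γ : ℝ} (h0 : 0 < γ) (h2 : γ < 2) {ξ : ℝ} (hξ : ξ ≠ 0) :
    Integrable (cosKernel γ ξ) := by
  rw [funext (cosKernel_eq_mul_cosKernel_one γ hξ)]
  exact ((integrable_cosKernel_one h0 h2).comp_mul_left' hξ).const_mul _

lemma integral_cosKernel {γ : ℝ} (hγ : γ ≠ 0) (ξ : ℝ) :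
    ∫ h, cosKernel γ ξ h = |ξ| ^ γ * ∫ h, cosKernel γ 1 h := by
  rcases eq_or_ne ξ 0 with rfl | hξ
  · simp [cosKernel, zero_rpow hγ]
  rw [funext (cosKernel_eq_mul_cosKernel_one γ hξ), integral_const_mul,
    Measure.integral_comp_mul_left (cosKernel γ 1) ξ, smul_eq_mul, abs_inv, ← mul_assoc,
    ← rpow_neg_one, ← rpow_add (abs_pos.2 hξ)]
  ring_nf

lemma integral_cosKernel_one_pos {γ : ℝ} (h0 : 0 < γ) (h2 : γ < 2) :
    0 < ∫ h, cosKernel γ 1 h := by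
  rw [integral_pos_iff_support_of_nonneg (cosKernel_nonneg γ 1) (integrable_cosKernel_one h0 h2)]
  have hsub : Ioo (0 : ℝ) (1 / 2) ⊆ support (cosKernel γ 1) := by
    intro u ⟨hu0, hu1⟩
    have hcos : cos (2 * π * 1 * u) < 1 := by
      simpa using cos_lt_cos_of_nonneg_of_le_pi le_rfl (by nlinarith [pi_pos]) (by positivity)
    exact div_ne_zero (by linarith) (rpow_pos_of_pos (abs_pos.2 hu0.ne') _).ne'
  refine lt_of_lt_of_le ?_ (measure_mono hsub)
  simp

lemma integral_abs_rpow_smul_eq_integral_cosKernel {E : Type*} [NormedAddCommGroup E]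
    [NormedSpace ℝ E] [CompleteSpace E] {γ : ℝ} (h0 : 0 < γ) (h2 : γ < 2) {g : ℝ → E}
    (hg : Continuous g) (hgi : Integrable fun ξ => |ξ| ^ γ * ‖g ξ‖) :
    ∫ ξ, |ξ| ^ γ • g ξ = (∫ h, cosKernel γ 1 h)⁻¹ •
      ∫ h, (|h| ^ (1 + γ))⁻¹ • ∫ ξ, (1 - cos (2 * π * ξ * h)) • g ξ := by
  set K := ∫ h, cosKernel γ 1 h
  have hK : K ≠ 0 := (integral_cosKernel_one_pos h0 h2).ne'
  have hprod : Integrable (uncurry fun ξ h => cosKernel γ ξ h • g ξ) (volume.prod volume) := by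
    refine (integrable_prod_iff ?_).2 ⟨?_, ?_⟩
    · have hker : Measurable fun p : ℝ × ℝ => cosKernel γ p.1 p.2 := by
        unfold cosKernel; fun_prop
      exact (hker.stronglyMeasurable.smul
        (hg.comp continuous_fst).stronglyMeasurable).aestronglyMeasurable
    · filter_upwards [compl_mem_ae_iff.mpr (measure_singleton (0 : ℝ))] with ξ hξ
      exact (integrable_cosKernel h0 h2 hξ).smul_const (g ξ)
    · refine (hgi.const_mul K).congr (ae_of_all _ fun ξ => ?_)
      simp only [uncurry_apply_pair, norm_smul, norm_of_nonneg (cosKernel_nonneg _ _ _)]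
      rw [integral_mul_const, integral_cosKernel h0.ne']
      ring
  calc ∫ ξ, |ξ| ^ γ • g ξ = K⁻¹ • ∫ ξ, ∫ h, cosKernel γ ξ h • g ξ := by
        rw [← integral_smul]
        congr 1 with ξ
        rw [integral_smul_const, integral_cosKernel h0.ne', smul_smul, mul_comm, mul_assoc,
          mul_inv_cancel₀ hK, mul_one]
    _ = K⁻¹ • ∫ h, ∫ ξ, cosKernel γ ξ h • g ξ := by rw [integral_integral_swap hprod]
    _ = _ := by
        congr 1
        congr 1 with h
        rw [← integral_smul]
        congr 1 with ξ
        rw [cosKernel, div_eq_inv_mul, mul_smul]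

section FourierInversion

variable {f : ℝ → ℂ}

lemma integral_fourier_mul_exp (hf : Continuous f) (hfi : Integrable f) (hFf : Integrable (𝓕 f))
    (a : ℝ) : ∫ ξ, 𝓕 f ξ * Complex.exp (((2 * π * ξ * a : ℝ) : ℂ) * Complex.I) = f a := by
  conv_rhs => rw [← hf.fourierInv_fourier_eq hfi hFf, fourierInv_eq']
  congr 1 with ξ
  rw [smul_eq_mul, mul_comm]
  simp only [RCLike.inner_apply, conj_trivial]
  ring_nf

lemma integrable_fourier_mul_exp (hFf : Integrable (𝓕 f)) (a : ℝ) :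
    Integrable fun ξ => 𝓕 f ξ * Complex.exp (((2 * π * ξ * a : ℝ) : ℂ) * Complex.I) :=
  hFf.mul_bdd (by fun_prop) (c := 1) (ae_of_all _ fun ξ => (Complex.norm_exp_ofReal_mul_I _).le)

lemma one_sub_cos_smul_mul_exp (z : ℂ) (ξ x h : ℝ) :
    (1 - cos (2 * π * ξ * h)) • (z * Complex.exp (((2 * π * ξ * x : ℝ) : ℂ) * Complex.I)) =
      z * Complex.exp (((2 * π * ξ * x : ℝ) : ℂ) * Complex.I)
        - z * Complex.exp (((2 * π * ξ * (x + h) : ℝ) : ℂ) * Complex.I) / 2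
        - z * Complex.exp (((2 * π * ξ * (x - h) : ℝ) : ℂ) * Complex.I) / 2 := by
  rw [Complex.real_smul]
  push_cast
  simp only [Complex.cos, mul_add, mul_sub, add_mul, sub_mul, neg_mul, Complex.exp_add,
    Complex.exp_sub, Complex.exp_neg]
  field_simp
  ring

lemma integral_one_sub_cos_smul_fourier_mul_exp (hf : Continuous f) (hfi : Integrable f)
    (hFf : Integrable (𝓕 f)) (x h : ℝ) :
    ∫ ξ, (1 - cos (2 * π * ξ * h)) •
        (𝓕 f ξ * Complex.exp (((2 * π * ξ * x : ℝ) : ℂ) * Complex.I))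
      = f x - (f (x + h) + f (x - h)) / 2 := by
  simp_rw [one_sub_cos_smul_mul_exp]
  have hI := integrable_fourier_mul_exp hFf
  rw [integral_sub, integral_sub, integral_div, integral_div]
  · simp only [integral_fourier_mul_exp hf hfi hFf]
    ring
  all_goals fun_prop

end FourierInversion

lemma integral_inv_two_smul_comp_add_add_comp_sub {E : Type*} [NormedAddCommGroup E]
    [NormedSpace ℝ E] {φ : ℝ → E} (hφ : Integrable φ) (x : ℝ) :
    ∫ h, (2⁻¹ : ℝ) • (φ (x + h) + φ (x - h)) = ∫ y, φ y := by
  rw [integral_smul, integral_add (hφ.comp_add_left x) (hφ.comp_sub_left x),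
    integral_add_left_eq_self, integral_sub_left_eq_self, ← two_smul ℝ, smul_smul]
  norm_num

section SingularIntegral

variable {f : ℝ → ℂ} {M M' : ℝ}

lemma norm_sub_div_rpow_le (hf : Differentiable ℝ f) (hM : ∀ y, ‖f y‖ ≤ M)
    (hM' : ∀ y, ‖deriv f y‖ ≤ M') (γ x y : ℝ) :
    ‖(f x - f y) / ((|x - y| ^ (1 + γ) : ℝ) : ℂ)‖
      ≤ (2 * M + M') * min (|x - y| ^ (-γ)) (|x - y| ^ (-(1 + γ))) := by
  have hM0 : 0 ≤ M := (norm_nonneg _).trans (hM 0)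
  have hM'0 : 0 ≤ M' := (norm_nonneg _).trans (hM' 0)
  rcases eq_or_ne x y with rfl | hxy
  · simpa using mul_nonneg (by positivity : 0 ≤ 2 * M + M')
      (le_min (rpow_nonneg le_rfl (-γ)) (rpow_nonneg le_rfl (-(1 + γ))))
  set d := |x - y|
  have hd : 0 < d := abs_pos.2 (sub_ne_zero.2 hxy)
  have hlip : ‖f x - f y‖ ≤ M' * d := by
    simpa [d, Real.norm_eq_abs, abs_sub_comm] using
      convex_univ.norm_image_sub_le_of_norm_deriv_le (fun z _ => hf z) (fun z _ => hM' z)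
        (mem_univ y) (mem_univ x)
  have hbdd : ‖f x - f y‖ ≤ 2 * M := (norm_sub_le _ _).trans (by linarith [hM x, hM y])
  have hdγ : d ^ (-γ) = d * d ^ (-(1 + γ)) := by
    rw [show -γ = 1 + -(1 + γ) by ring, rpow_add hd, rpow_one]
  have hpos : 0 < d ^ (-(1 + γ)) := rpow_pos_of_pos hd _
  rw [norm_div, Complex.norm_real, norm_of_nonneg (rpow_nonneg hd.le _), div_eq_mul_inv,
    ← rpow_neg hd.le, mul_min_of_nonneg _ _ (by positivity), hdγ]
  refine le_min ?_ ?_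
  · nlinarith [mul_le_mul_of_nonneg_right hlip hpos.le,
      mul_nonneg (mul_nonneg hM0 hd.le) hpos.le]
  · nlinarith [mul_le_mul_of_nonneg_right hbdd hpos.le, mul_nonneg hM'0 hpos.le]

variable {γ : ℝ} (h0 : 0 < γ) (h1 : γ < 1)
include h0 h1

lemma integrable_sub_div_rpow (hf : Differentiable ℝ f) (hM : ∀ y, ‖f y‖ ≤ M)
    (hM' : ∀ y, ‖deriv f y‖ ≤ M') (x : ℝ) :
    Integrable fun y => (f x - f y) / ((|x - y| ^ (1 + γ) : ℝ) : ℂ) := by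
  have hmin := integrable_min_rpow_abs (a := -γ) (b := -(1 + γ)) (by linarith) (by linarith)
  have hmeas : AEStronglyMeasurable fun y => (f x - f y) / ((|x - y| ^ (1 + γ) : ℝ) : ℂ) := by
    have := hf.continuous.measurable
    apply Measurable.aestronglyMeasurable
    fun_prop
  exact ((hmin.comp_sub_left x).const_mul (2 * M + M')).mono' hmeas
    (ae_of_all _ (norm_sub_div_rpow_le hf hM hM' γ x))

lemma norm_integral_sub_div_rpow_le (hf : Differentiable ℝ f) (hM : ∀ y, ‖f y‖ ≤ M)
    (hM' : ∀ y, ‖deriv f y‖ ≤ M') (x : ℝ) :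
    ‖∫ y, (f x - f y) / ((|x - y| ^ (1 + γ) : ℝ) : ℂ)‖
      ≤ (2 * M + M') * ∫ h, min (|h| ^ (-γ)) (|h| ^ (-(1 + γ))) :=
  calc _ ≤ ∫ y, (2 * M + M') * min (|x - y| ^ (-γ)) (|x - y| ^ (-(1 + γ))) :=
        norm_integral_le_of_norm_le
          (((integrable_min_rpow_abs (by linarith) (by linarith)).comp_sub_left x).const_mul _)
          (ae_of_all _ (norm_sub_div_rpow_le hf hM hM' γ x))
    _ = _ := by
        rw [integral_const_mul,
          integral_sub_left_eq_self (fun h => min (|h| ^ (-γ)) (|h| ^ (-(1 + γ))))]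

end SingularIntegral

namespace SchwartzMap

lemma integrable_abs_rpow_mul_norm {F : Type*} [NormedAddCommGroup F] [NormedSpace ℝ F]
    (φ : 𝓢(ℝ, F)) {γ : ℝ} (h0 : 0 ≤ γ) (h1 : γ ≤ 1) :
    Integrable fun ξ => |ξ| ^ γ * ‖φ ξ‖ := by
  refine ((φ.integrable_pow_mul volume 0).add (φ.integrable_pow_mul volume 1)).mono'
    (by fun_prop) (ae_of_all _ fun ξ => ?_)
  have hξ : |ξ| ^ γ ≤ 1 + |ξ| :=
    (rpow_le_rpow (abs_nonneg ξ) (le_add_of_nonneg_left zero_le_one) h0).trans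
      (by simpa using rpow_le_rpow_of_exponent_le (le_add_of_nonneg_right (abs_nonneg ξ)) h1)
  rw [norm_mul, norm_norm, norm_of_nonneg (rpow_nonneg (abs_nonneg ξ) γ)]
  simp only [Pi.add_apply, pow_zero, one_mul, pow_one, Real.norm_eq_abs]
  nlinarith [norm_nonneg (φ ξ)]

lemma norm_le_iSup_norm {E F : Type*} [NormedAddCommGroup E] [NormedSpace ℝ E]
    [NormedAddCommGroup F] [NormedSpace ℝ F] (φ : 𝓢(E, F)) (y : E) : ‖φ y‖ ≤ ⨆ y, ‖φ y‖ :=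
  le_ciSup ⟨SchwartzMap.seminorm ℝ 0 0 φ, by rintro _ ⟨z, rfl⟩; exact φ.norm_le_seminorm ℝ z⟩ y

lemma norm_deriv_le_iSup_norm_deriv {F : Type*} [NormedAddCommGroup F] [NormedSpace ℝ F]
    (φ : 𝓢(ℝ, F)) (y : ℝ) : ‖deriv φ y‖ ≤ ⨆ y, ‖deriv φ y‖ :=
  (derivCLM ℝ F φ).norm_le_iSup_norm y

end SchwartzMap

theorem fracLap_eq_mul_integral_sub_div_rpow {γ : ℝ} (h0 : 0 < γ) (h1 : γ < 1)
    (f : 𝓢(ℝ, ℂ)) (x : ℝ) :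
    fracLap γ f x = (((2 * π) ^ γ / ∫ h, cosKernel γ 1 h : ℝ) : ℂ) *
      ∫ y, (f x - f y) / ((|x - y| ^ (1 + γ) : ℝ) : ℂ) := by
  set K := ∫ h, cosKernel γ 1 h
  set φ : ℝ → ℂ := fun y => (f x - f y) / ((|x - y| ^ (1 + γ) : ℝ) : ℂ)
  have hφ : Integrable φ := integrable_sub_div_rpow h0 h1 f.differentiable f.norm_le_iSup_norm
    f.norm_deriv_le_iSup_norm_deriv x
  have hFf : 𝓕 ⇑f = ⇑(𝓕 f : 𝓢(ℝ, ℂ)) := rfl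
  set g : ℝ → ℂ := fun ξ => 𝓕 ⇑f ξ * Complex.exp (((2 * π * ξ * x : ℝ) : ℂ) * Complex.I)
  have hg : Continuous g := by
    have := (𝓕 f : 𝓢(ℝ, ℂ)).continuous
    simp only [g, hFf]
    fun_prop
  have hgi : Integrable fun ξ => |ξ| ^ γ * ‖g ξ‖ := by
    simpa only [g, norm_mul, Complex.norm_exp_ofReal_mul_I, mul_one, hFf]
      using (𝓕 f : 𝓢(ℝ, ℂ)).integrable_abs_rpow_mul_norm h0.le h1.le
  calc fracLap γ f x = (2 * π) ^ γ • ∫ ξ, |ξ| ^ γ • g ξ := by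
        rw [fracLap, ← integral_smul]
        congr 1 with ξ
        rw [mul_rpow (by positivity) (abs_nonneg ξ), mul_smul]
    _ = (2 * π) ^ γ • (K⁻¹ • ∫ h, (|h| ^ (1 + γ))⁻¹ • (f x - (f (x + h) + f (x - h)) / 2)) := by
        rw [integral_abs_rpow_smul_eq_integral_cosKernel h0 (by linarith) hg hgi]
        simp only [g, integral_one_sub_cos_smul_fourier_mul_exp f.continuous f.integrable
          (hFf ▸ (𝓕 f : 𝓢(ℝ, ℂ)).integrable)]
        rfl
    _ = (2 * π) ^ γ • (K⁻¹ • ∫ h, (2⁻¹ : ℝ) • (φ (x + h) + φ (x - h))) := by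
        congr 2
        congr 1 with h
        simp only [φ, show x - (x + h) = -h by ring, show x - (x - h) = h by ring, abs_neg,
          Complex.real_smul]
        push_cast
        ring
    _ = _ := by
        rw [integral_inv_two_smul_comp_add_add_comp_sub hφ, smul_smul, Complex.real_smul]
        push_cast
        ring

/-- For `0 < γ < 1` there is a constant `C_γ` such that for every Schwartz `f`,
`(-Δ)^{γ/2} f(x) = C_γ ∫ (f(x) - f(y))/|x-y|^{1+γ} dy`, and moreover
`‖(-Δ)^{γ/2} f‖_∞ ≲ ‖f‖_∞ + ‖f'‖_∞`. -/
theorem stmt1 (γ : ℝ) (h0 : 0 < γ) (h1 : γ < 1) :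
    (∃ C : ℝ, ∀ f : SchwartzMap ℝ ℂ, ∀ x : ℝ,
      fracLap γ (fun y => f y) x =
        (C : ℂ) * ∫ y : ℝ, (f x - f y) / ((|x - y| ^ (1 + γ) : ℝ) : ℂ)) ∧
    ∃ C' : ℝ, 0 < C' ∧ ∀ f : SchwartzMap ℝ ℂ, ∀ x : ℝ,
      ‖fracLap γ (fun y => f y) x‖ ≤
        C' * ((⨆ y : ℝ, ‖f y‖) + ⨆ y : ℝ, ‖deriv (fun z : ℝ => f z) y‖) := by
  set C := (2 * π) ^ γ / ∫ h, cosKernel γ 1 h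
  set A := ∫ h : ℝ, min (|h| ^ (-γ)) (|h| ^ (-(1 + γ)))
  have hA : 0 ≤ A := integral_nonneg fun h =>
    le_min (rpow_nonneg (abs_nonneg h) _) (rpow_nonneg (abs_nonneg h) _)
  refine ⟨⟨C, fracLap_eq_mul_integral_sub_div_rpow h0 h1⟩, 2 * |C| * A + 1, by positivity,
    fun f x => ?_⟩
  set M := ⨆ y, ‖f y‖
  set M' := ⨆ y, ‖deriv f y‖
  have hM : 0 ≤ M := (norm_nonneg _).trans (f.norm_le_iSup_norm 0)
  have hM' : 0 ≤ M' := (norm_nonneg _).trans (f.norm_deriv_le_iSup_norm_deriv 0)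
  calc ‖fracLap γ f x‖ = |C| * ‖∫ y, (f x - f y) / ((|x - y| ^ (1 + γ) : ℝ) : ℂ)‖ := by
        rw [fracLap_eq_mul_integral_sub_div_rpow h0 h1, norm_mul, Complex.norm_real,
          Real.norm_eq_abs]
    _ ≤ |C| * ((2 * M + M') * A) := by
        gcongr
        exact norm_integral_sub_div_rpow_le h0 h1 f.differentiable f.norm_le_iSup_norm
          f.norm_deriv_le_iSup_norm_deriv x
    _ ≤ (2 * |C| * A + 1) * (M + M') := by
        nlinarith [mul_nonneg (mul_nonneg (abs_nonneg C) hA) hM']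
end

section
/- Let ζ, η ∈ (0,3) with ζ + η < 3 and let C > 0. Then uniformly over z ∈ ℝ², ∫_{{w : ‖w‖ ≤ C, ‖z-w‖ ≤ C}} ‖w‖^{-ζ} ‖z - w‖^{-η} dw ≲ C^{3-ζ-η}, where ‖(t,x)‖ = √|t| + |x|. -/
/-!
The integrand is at most `‖w‖ ^ (-(ζ + η)) + ‖z - w‖ ^ (-(ζ + η))`: bound the factor with the
larger norm by the one with the smaller norm. After the translation `w ↦ z - w` both terms are the
integral of `‖w‖ ^ (-(ζ + η))` over the parabolic ball of radius `C`. That ball lies in the box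
`[-C², C²] × [-C, C]`, so the parabolic space has homogeneous dimension `3`, and the layer cake
formula gives the bound `≲ C ^ (3 - (ζ + η))` as soon as `ζ + η < 3`.
-/

open MeasureTheory Real

/-- The parabolic norm `‖(t,x)‖ = √|t| + |x|` on `ℝ²`. -/
noncomputable def pnorm (z : ℝ × ℝ) : ℝ := Real.sqrt |z.1| + |z.2|

open Set

lemma le_rpow_inv_of_lt_rpow {x t a : ℝ} (hx : 0 ≤ x) (ht : 0 < t) (ha : a < 0)
    (h : t < x ^ a) : x ≤ t ^ a⁻¹ := by
  have hx0 : 0 < x := by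
    rcases hx.eq_or_lt with rfl | hx0
    · rw [zero_rpow ha.ne] at h; linarith
    · exact hx0
  exact not_lt.1 fun h' => h.not_ge ((rpow_inv_lt_iff_of_neg ht hx0 ha).1 h').le

lemma lintegral_rpow_neg_le_of_measure_le {α : Type*} [MeasurableSpace α] {μ : Measure α}
    {g : α → ℝ} (hg : Measurable g) (hg0 : ∀ x, 0 ≤ g x) {K d a : ℝ} (hK : 0 ≤ K) (ha : 0 < a)
    (had : a < d) (hvol : ∀ r, 0 ≤ r → μ {x | g x ≤ r} ≤ ENNReal.ofReal (K * r ^ d))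
    {C : ℝ} (hC : 0 < C) :
    ∫⁻ x in {x | g x ≤ C}, ENNReal.ofReal (g x ^ (-a)) ∂μ ≤
      ENNReal.ofReal (K * d / (d - a) * C ^ (d - a)) := by
  -- Layer cake, split at height `s₀`: below it use the mass of `{g ≤ C}`, above it the
  -- sublevel bound, which makes the tail `∫ K t ^ (-d / a)` converge since `a < d`.
  set s₀ := C ^ (-a)
  have hs₀ : 0 < s₀ := rpow_pos_of_pos hC _
  have hda : 0 < d - a := by linarith
  have hexp : -d / a < -1 := by rw [div_lt_iff₀ ha]; linarith
  rw [lintegral_eq_lintegral_meas_lt _ (.of_forall fun x => rpow_nonneg (hg0 x) _)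
      (hg.pow_const _).aemeasurable, ← Ioc_union_Ioi_eq_Ioi hs₀.le,
    lintegral_union measurableSet_Ioi Ioc_disjoint_Ioi_same]
  have low : ∫⁻ t in Ioc 0 s₀, μ.restrict {x | g x ≤ C} {x | t < g x ^ (-a)} ≤
      ENNReal.ofReal (K * C ^ d) * ENNReal.ofReal s₀ := by
    calc _ ≤ ∫⁻ _ in Ioc 0 s₀, μ {x | g x ≤ C} :=
          lintegral_mono fun t => (measure_mono (subset_univ _)).trans
            (Measure.restrict_apply_univ _).le
      _ ≤ _ := by
          rw [setLIntegral_const, Real.volume_Ioc, sub_zero]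
          gcongr
          exact hvol C hC.le
  have high : ∫⁻ t in Ioi s₀, μ.restrict {x | g x ≤ C} {x | t < g x ^ (-a)} ≤
      ENNReal.ofReal (K * (-s₀ ^ (-d / a + 1) / (-d / a + 1))) := by
    calc _ ≤ ∫⁻ t in Ioi s₀, ENNReal.ofReal (K * t ^ (-d / a)) := by
          refine setLIntegral_mono' measurableSet_Ioi fun t ht => ?_
          have ht0 : 0 < t := hs₀.trans ht
          calc _ ≤ μ {x | t < g x ^ (-a)} := Measure.restrict_apply_le _ _
            _ ≤ μ {x | g x ≤ t ^ (-a)⁻¹} := measure_mono fun x hx =>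
                le_rpow_inv_of_lt_rpow (hg0 x) ht0 (neg_neg_of_pos ha) hx
            _ ≤ _ := (hvol _ (rpow_nonneg ht0.le _)).trans_eq <| by
                rw [← rpow_mul ht0.le, inv_neg, neg_mul, ← div_eq_inv_mul, neg_div]
      _ = ENNReal.ofReal (∫ t in Ioi s₀, K * t ^ (-d / a)) := by
          rw [ofReal_integral_eq_lintegral_ofReal
            ((integrableOn_Ioi_rpow_of_lt hexp hs₀).const_mul K)]
          filter_upwards [self_mem_ae_restrict measurableSet_Ioi] with t ht
          have : 0 < t := hs₀.trans ht
          positivity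
      _ = _ := by rw [integral_const_mul, integral_Ioi_rpow_of_lt hexp hs₀]
  have hmass : C ^ d * s₀ = C ^ (d - a) := by rw [← rpow_add hC, sub_eq_add_neg]
  have htail : -s₀ ^ (-d / a + 1) / (-d / a + 1) = C ^ (d - a) * (a / (d - a)) := by
    have hpow : s₀ ^ (-d / a + 1) = C ^ (d - a) := by
      rw [← rpow_mul hC.le]; congr 1; field_simp; ring
    rw [hpow, show -d / a + 1 = -((d - a) / a) by field_simp; ring, div_neg, neg_div, neg_neg,
      div_div_eq_mul_div, mul_div_assoc]
  refine (add_le_add low high).trans_eq ?_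
  rw [← ENNReal.ofReal_mul (by positivity), mul_assoc, hmass, htail,
    ← ENNReal.ofReal_add (by positivity) (by positivity)]
  congr 1
  field_simp
  ring

lemma rpow_neg_mul_rpow_neg_le_of_le {u v ζ η : ℝ} (hv : 0 ≤ v) (hvu : v ≤ u) (hζ : 0 ≤ ζ)
    (hη : 0 < η) : u ^ (-ζ) * v ^ (-η) ≤ v ^ (-(ζ + η)) := by
  rcases hv.eq_or_lt with rfl | hv0
  · rw [zero_rpow (neg_ne_zero.2 hη.ne'), mul_zero]
    exact rpow_nonneg le_rfl _
  · calc u ^ (-ζ) * v ^ (-η) ≤ v ^ (-ζ) * v ^ (-η) :=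
          mul_le_mul_of_nonneg_right (rpow_le_rpow_of_nonpos hv0 hvu (neg_nonpos.2 hζ))
            (rpow_nonneg hv _)
      _ = v ^ (-(ζ + η)) := by rw [← rpow_add hv0, neg_add]

lemma rpow_neg_mul_rpow_neg_le {u v ζ η : ℝ} (hu : 0 ≤ u) (hv : 0 ≤ v) (hζ : 0 < ζ)
    (hη : 0 < η) : u ^ (-ζ) * v ^ (-η) ≤ u ^ (-(ζ + η)) + v ^ (-(ζ + η)) := by
  rcases le_total v u with hvu | huv
  · exact (rpow_neg_mul_rpow_neg_le_of_le hv hvu hζ.le hη).trans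
      (le_add_of_nonneg_left (rpow_nonneg hu _))
  · rw [mul_comm, add_comm ζ]
    exact (rpow_neg_mul_rpow_neg_le_of_le hu huv hη.le hζ).trans
      (le_add_of_nonneg_right (rpow_nonneg hv _))

lemma pnorm_nonneg (z : ℝ × ℝ) : 0 ≤ pnorm z :=
  add_nonneg (sqrt_nonneg _) (abs_nonneg _)

lemma continuous_pnorm : Continuous pnorm := by
  unfold pnorm; fun_prop

lemma volume_setOf_pnorm_le {r : ℝ} (hr : 0 ≤ r) :
    volume {w : ℝ × ℝ | pnorm w ≤ r} ≤ ENNReal.ofReal (4 * r ^ (3 : ℝ)) := by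
  have hbox : {w : ℝ × ℝ | pnorm w ≤ r} ⊆ Icc (-r ^ 2) (r ^ 2) ×ˢ Icc (-r) r := by
    intro w hw
    have h1 : √|w.1| ≤ r := (le_add_of_nonneg_right (abs_nonneg _)).trans hw
    have h2 : |w.2| ≤ r := (le_add_of_nonneg_left (sqrt_nonneg _)).trans hw
    exact ⟨abs_le.1 ((sqrt_le_left hr).1 h1), abs_le.1 h2⟩
  calc volume {w : ℝ × ℝ | pnorm w ≤ r} ≤ volume (Icc (-r ^ 2) (r ^ 2) ×ˢ Icc (-r) r) :=
        measure_mono hbox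
    _ = ENNReal.ofReal (4 * r ^ (3 : ℝ)) := by
        rw [Measure.volume_eq_prod, Measure.prod_prod, Real.volume_Icc, Real.volume_Icc,
          ← ENNReal.ofReal_mul (by nlinarith), rpow_ofNat]
        ring_nf

lemma setLIntegral_comp_sub_left_pnorm_le (f : ℝ × ℝ → ENNReal) (z : ℝ × ℝ) (C : ℝ) :
    ∫⁻ w in {w | pnorm (z - w) ≤ C}, f (z - w) = ∫⁻ u in {u | pnorm u ≤ C}, f u :=
  (Measure.measurePreserving_sub_left volume z).setLIntegral_comp_preimage_emb
    (MeasurableEquiv.subLeft z).measurableEmbedding f {u | pnorm u ≤ C}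

/-- For `ζ, η ∈ (0,3)` with `ζ + η < 3` and `C > 0`, uniformly over `z ∈ ℝ²`:
`∫_{‖w‖ ≤ C, ‖z-w‖ ≤ C} ‖w‖^{-ζ} ‖z-w‖^{-η} dw ≲ C^{3-ζ-η}`,
with implied constant depending only on `ζ, η`. -/
theorem stmt6 (ζ η : ℝ) (hζ : ζ ∈ Set.Ioo (0:ℝ) 3) (hη : η ∈ Set.Ioo (0:ℝ) 3)
    (hsum : ζ + η < 3) :
    ∃ C' : ℝ, 0 < C' ∧ ∀ C : ℝ, 0 < C → ∀ z : ℝ × ℝ,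
      ∫⁻ w in {w : ℝ × ℝ | pnorm w ≤ C ∧ pnorm (z - w) ≤ C},
        ENNReal.ofReal (pnorm w ^ (-ζ) * pnorm (z - w) ^ (-η)) ≤
        ENNReal.ofReal (C' * C ^ (3 - ζ - η)) := by
  obtain ⟨hζ0, -⟩ := hζ
  obtain ⟨hη0, -⟩ := hη
  set f := fun w : ℝ × ℝ => ENNReal.ofReal (pnorm w ^ (-(ζ + η)))
  set B := 4 * 3 / (3 - (ζ + η))
  have hball : ∀ C, 0 < C → ∫⁻ w in {w | pnorm w ≤ C}, f w ≤
      ENNReal.ofReal (B * C ^ (3 - (ζ + η))) := fun C hC =>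
    lintegral_rpow_neg_le_of_measure_le continuous_pnorm.measurable pnorm_nonneg
      (by norm_num) (by positivity) hsum (fun r => volume_setOf_pnorm_le) hC
  refine ⟨2 * B, by unfold B; bound, fun C hC z => ?_⟩
  calc _ ≤ ∫⁻ w in {w | pnorm w ≤ C ∧ pnorm (z - w) ≤ C}, f w + f (z - w) :=
        lintegral_mono fun w => by
          rw [← ENNReal.ofReal_add (rpow_nonneg (pnorm_nonneg _) _)
            (rpow_nonneg (pnorm_nonneg _) _)]
          exact ENNReal.ofReal_le_ofReal
            (rpow_neg_mul_rpow_neg_le (pnorm_nonneg _) (pnorm_nonneg _) hζ0 hη0)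
    _ ≤ (∫⁻ w in {w | pnorm w ≤ C}, f w) + ∫⁻ w in {w | pnorm (z - w) ≤ C}, f (z - w) := by
        rw [lintegral_add_left (continuous_pnorm.measurable.pow_const _).ennreal_ofReal]
        exact add_le_add (lintegral_mono_set fun w hw => hw.1)
          (lintegral_mono_set fun w hw => hw.2)
    _ ≤ _ := by
        rw [setLIntegral_comp_sub_left_pnorm_le, ← two_mul, sub_sub, mul_assoc,
          ENNReal.ofReal_mul zero_le_two, ENNReal.ofReal_ofNat]
        gcongr
        exact hball C hC
end

section
/- Let 0 < γ < 1 and let ∂_x^γ K' denote the spatial fractional derivative of the spatial derivative of the truncated heat kernel K. Then for every x ≠ 0, the one-sided limit ∂_x^γ K'(0+, x) := lim_{t↓0} ∂_x^γ K'(t,x) exists. Moreover, the extension defined by reflecting in t satisfies |tilde{∂_x^γ K'}(z) - tilde{∂_x^γ K'}(w)| ≲ ‖z-w‖ ‖z‖^{-3-γ} uniformly over z, w with ‖z-w‖ ≤ ‖z‖/2. -/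
open MeasureTheory Real Filter

/-!
Away from `t = 0` both bounds are mean value estimates along segments that stay at parabolic
distance `≥ ‖z‖/2` from the origin. In time, `F(·, x)` is Lipschitz on the part of `(0, ∞)` where
this holds; when that part reaches `t = 0` (that is, `|x| ≥ ‖z‖/2`) its Lipschitz extension supplies
the limit `F(0+, x)`. The even extension only sees `|t|`, and `||t| - |s|| ≤ |t - s|`. Splitting
`z - w` into a time step and a space step, the extra power of `‖z‖` in the time estimate is paid
for by `|t - s| = √|t - s| ^ 2 ≤ ‖z - w‖ ‖z‖ / 2`.
-/

open Set Topology

lemma pnorm_pos {z : ℝ × ℝ} (hz : z ≠ 0) : 0 < pnorm z := by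
  obtain ⟨t, x⟩ := z
  rcases eq_or_ne t 0 with rfl | ht
  · have hx : x ≠ 0 := fun hx => hz (by simp [hx])
    simpa [pnorm] using hx
  · exact add_pos_of_pos_of_nonneg (Real.sqrt_pos.mpr (abs_pos.mpr ht)) (abs_nonneg x)

lemma sqrt_add_le_sqrt_add_sqrt {a b : ℝ} (ha : 0 ≤ a) (hb : 0 ≤ b) : √(a + b) ≤ √a + √b := by
  refine Real.sqrt_le_iff.mpr ⟨by positivity, ?_⟩
  nlinarith [Real.sq_sqrt ha, Real.sq_sqrt hb, Real.sqrt_nonneg a, Real.sqrt_nonneg b]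

lemma pnorm_add_le (z w : ℝ × ℝ) : pnorm (z + w) ≤ pnorm z + pnorm w := by
  have hsqrt : √|z.1 + w.1| ≤ √|z.1| + √|w.1| :=
    (Real.sqrt_le_sqrt (abs_add_le _ _)).trans
      (sqrt_add_le_sqrt_add_sqrt (abs_nonneg _) (abs_nonneg _))
  simp only [pnorm, Prod.fst_add, Prod.snd_add]
  linarith [abs_add_le z.2 w.2]

lemma pnorm_le_pnorm_of_abs_le {t s : ℝ} (x : ℝ) (h : |t| ≤ |s|) : pnorm (t, x) ≤ pnorm (s, x) :=
  add_le_add_left (Real.sqrt_le_sqrt h) _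

lemma pnorm_abs_fst (t x : ℝ) : pnorm (|t|, x) = pnorm (t, x) := by
  simp [pnorm]

lemma sub_pnorm_sub_le_pnorm {t s x y u : ℝ} (hu : u ∈ uIcc x y) :
    pnorm (t, x) - pnorm ((t, x) - (s, y)) ≤ pnorm (s, u) := by
  have htri := pnorm_add_le (s, u) (t - s, x - u)
  have hxu : |x - u| ≤ |x - y| := by
    simpa only [abs_sub_comm] using abs_sub_left_of_mem_uIcc hu
  have hsub : pnorm (t - s, x - u) ≤ pnorm ((t, x) - (s, y)) := by
    simp only [pnorm, Prod.mk_sub_mk]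
    linarith
  simp only [Prod.mk_add_mk, add_sub_cancel] at htri
  linarith

/-- At `t = 0` this is the limit `F(0+, x)`, a junk value where that limit does not exist. -/
noncomputable def evenTimeExt (F : ℝ × ℝ → ℝ) : ℝ × ℝ → ℝ := fun z =>
  if z.1 = 0 then limUnder (𝓝[>] 0) (fun t => F (t, z.2)) else F (|z.1|, z.2)

section evenTimeExt

variable {F : ℝ × ℝ → ℝ}

lemma evenTimeExt_of_ne_zero {t : ℝ} (x : ℝ) (ht : t ≠ 0) :
    evenTimeExt F (t, x) = F (|t|, x) := by
  simp [evenTimeExt, ht]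

lemma evenTimeExt_of_pos {t : ℝ} (x : ℝ) (ht : 0 < t) : evenTimeExt F (t, x) = F (t, x) := by
  rw [evenTimeExt_of_ne_zero x ht.ne', abs_of_pos ht]

lemma evenTimeExt_of_neg {t : ℝ} (x : ℝ) (ht : t < 0) : evenTimeExt F (t, x) = F (-t, x) := by
  rw [evenTimeExt_of_ne_zero x ht.ne, abs_of_neg ht]

lemma evenTimeExt_zero_eq_of_tendsto {x L : ℝ}
    (h : Tendsto (fun t => F (t, x)) (𝓝[>] 0) (𝓝 L)) : evenTimeExt F (0, x) = L := by
  simpa [evenTimeExt] using h.limUnder_eq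

def HasTimeDerivBound (F : ℝ × ℝ → ℝ) (C p : ℝ) : Prop :=
  ∀ t x : ℝ, t ≠ 0 → DifferentiableAt ℝ (fun s => F (s, x)) t ∧
    |deriv (fun s => F (s, x)) t| ≤ C * pnorm (t, x) ^ p

def HasSpaceDerivBound (F : ℝ × ℝ → ℝ) (C p : ℝ) : Prop :=
  ∀ t x : ℝ, t ≠ 0 → DifferentiableAt ℝ (fun y => F (t, y)) x ∧
    |deriv (fun y => F (t, y)) x| ≤ C * pnorm (t, x) ^ p

variable {C p q : ℝ}

lemma HasTimeDerivBound.lipschitzOnWith (hF : HasTimeDerivBound F C p) (hp : p ≤ 0) (hC : 0 ≤ C)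
    {x r : ℝ} (hr : 0 < r) :
    LipschitzOnWith (C * r ^ p).toNNReal (fun t => F (t, x)) {t | 0 < t ∧ r ≤ pnorm (t, x)} := by
  have hconvex : Convex ℝ {t | 0 < t ∧ r ≤ pnorm (t, x)} := by
    refine Set.OrdConnected.convex ⟨fun a ha b _ t ht => ⟨ha.1.trans_le ht.1, ?_⟩⟩
    exact ha.2.trans (pnorm_le_pnorm_of_abs_le x (by
      rw [abs_of_pos ha.1, abs_of_pos (ha.1.trans_le ht.1)]; exact ht.1))
  refine hconvex.lipschitzOnWith_of_nnnorm_deriv_le (fun t ht => (hF t x ht.1.ne').1) ?_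
  intro t ht
  rw [← NNReal.coe_le_coe, coe_nnnorm, Real.coe_toNNReal _ (by positivity)]
  calc |deriv (fun s => F (s, x)) t| ≤ C * pnorm (t, x) ^ p := (hF t x ht.1.ne').2
    _ ≤ C * r ^ p := mul_le_mul_of_nonneg_left (Real.rpow_le_rpow_of_nonpos hr ht.2 hp) hC

/-- Where `‖(0, x)‖ = |x| ≥ r`, all of `(0, ∞)` lies in the Lipschitz region, so the limit
defining `evenTimeExt F (0, x)` is the value at `0` of the Lipschitz extension. -/
lemma HasTimeDerivBound.exists_lipschitzWith_evenTimeExt_eq (hF : HasTimeDerivBound F C p)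
    (hp : p ≤ 0) (hC : 0 ≤ C) {x r : ℝ} (hr : 0 < r) :
    ∃ g : ℝ → ℝ, LipschitzWith (C * r ^ p).toNNReal g ∧
      ∀ t, r ≤ pnorm (t, x) → evenTimeExt F (t, x) = g |t| := by
  obtain ⟨g, hg, hFg⟩ := (hF.lipschitzOnWith hp hC (x := x) hr).extend_real
  refine ⟨g, hg, fun t ht => ?_⟩
  rcases eq_or_ne t 0 with rfl | ht0
  · apply evenTimeExt_zero_eq_of_tendsto
    rw [abs_zero]
    refine ((hg.continuous.tendsto 0).mono_left nhdsWithin_le_nhds).congr' ?_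
    filter_upwards [self_mem_nhdsWithin] with τ hτ
    exact (hFg ⟨hτ, ht.trans (pnorm_le_pnorm_of_abs_le x (by simp))⟩).symm
  · rw [evenTimeExt_of_ne_zero x ht0]
    exact hFg ⟨abs_pos.mpr ht0, (pnorm_abs_fst t x).symm ▸ ht⟩

lemma HasTimeDerivBound.abs_evenTimeExt_sub_le (hF : HasTimeDerivBound F C p) (hp : p ≤ 0)
    (hC : 0 ≤ C) {t s x r : ℝ} (hr : 0 < r) (ht : r ≤ pnorm (t, x)) (hs : r ≤ pnorm (s, x)) :
    |evenTimeExt F (t, x) - evenTimeExt F (s, x)| ≤ C * r ^ p * |t - s| := by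
  obtain ⟨g, hg, hEg⟩ := hF.exists_lipschitzWith_evenTimeExt_eq hp hC (x := x) hr
  rw [hEg t ht, hEg s hs]
  calc |g (|t|) - g (|s|)| ≤ C * r ^ p * |(|t| - |s|)| := by
        simpa [← Real.dist_eq, Real.coe_toNNReal _ (by positivity : 0 ≤ C * r ^ p)]
          using hg.dist_le_mul |t| |s|
    _ ≤ C * r ^ p * |t - s| :=
        mul_le_mul_of_nonneg_left (abs_abs_sub_abs_le_abs_sub t s) (by positivity)

lemma HasTimeDerivBound.tendsto_evenTimeExt_zero (hF : HasTimeDerivBound F C p) (hp : p ≤ 0)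
    (hC : 0 ≤ C) {x : ℝ} (hx : x ≠ 0) :
    Tendsto (fun t => F (t, x)) (𝓝[>] 0) (𝓝 (evenTimeExt F (0, x))) := by
  have hx' : |x| ≤ pnorm ((0 : ℝ), x) := by simp [pnorm]
  obtain ⟨g, hg, hEg⟩ := hF.exists_lipschitzWith_evenTimeExt_eq hp hC (x := x) (abs_pos.mpr hx)
  rw [hEg 0 hx', abs_zero]
  refine ((hg.continuous.tendsto 0).mono_left nhdsWithin_le_nhds).congr' ?_
  filter_upwards [self_mem_nhdsWithin] with t ht
  rw [← evenTimeExt_of_pos (F := F) x ht,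
    hEg t (hx'.trans (pnorm_le_pnorm_of_abs_le x (by simp))), abs_of_pos ht]

lemma HasSpaceDerivBound.abs_sub_le (hF : HasSpaceDerivBound F C p) (hp : p ≤ 0) (hC : 0 ≤ C)
    {t x y r : ℝ} (ht : t ≠ 0) (hr : 0 < r) (hb : ∀ u ∈ uIcc x y, r ≤ pnorm (t, u)) :
    |F (t, x) - F (t, y)| ≤ C * r ^ p * |x - y| := by
  simpa only [Real.norm_eq_abs] using
    (convex_uIcc x y).norm_image_sub_le_of_norm_deriv_le (fun u _ => (hF t u ht).1)
      (fun u hu => (hF t u ht).2.trans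
        (mul_le_mul_of_nonneg_left (Real.rpow_le_rpow_of_nonpos hr (hb u hu) hp) hC))
      right_mem_uIcc left_mem_uIcc

lemma HasSpaceDerivBound.abs_evenTimeExt_sub_le (hF : HasSpaceDerivBound F C p)
    (hF' : HasTimeDerivBound F C q) (hp : p ≤ 0) (hq : q ≤ 0) (hC : 0 ≤ C) {s x y r : ℝ}
    (hr : 0 < r) (hb : ∀ u ∈ uIcc x y, r ≤ pnorm (s, u)) :
    |evenTimeExt F (s, x) - evenTimeExt F (s, y)| ≤ C * r ^ p * |x - y| := by
  rcases eq_or_ne s 0 with rfl | hs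
  · have hne : ∀ u ∈ uIcc x y, u ≠ 0 := fun u hu hu0 => by
      have := hb u hu
      simp only [pnorm, hu0, abs_zero, Real.sqrt_zero, add_zero] at this
      linarith
    have hlim := ((hF'.tendsto_evenTimeExt_zero hq hC (hne x left_mem_uIcc)).sub
      (hF'.tendsto_evenTimeExt_zero hq hC (hne y right_mem_uIcc))).abs
    refine le_of_tendsto hlim ?_
    filter_upwards [self_mem_nhdsWithin] with t ht
    exact hF.abs_sub_le hp hC ht.ne' hr fun u hu =>
      (hb u hu).trans (pnorm_le_pnorm_of_abs_le u (by simp))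
  · rw [evenTimeExt_of_ne_zero x hs, evenTimeExt_of_ne_zero y hs]
    exact hF.abs_sub_le hp hC (abs_ne_zero.mpr hs) hr fun u hu => pnorm_abs_fst s u ▸ hb u hu

lemma abs_evenTimeExt_sub_le (hq : q ≤ 0) (hC : 0 ≤ C) (hFx : HasSpaceDerivBound F C q)
    (hFt : HasTimeDerivBound F C (q - 1)) {z w : ℝ × ℝ} (hz : z ≠ 0)
    (hzw : pnorm (z - w) ≤ pnorm z / 2) :
    |evenTimeExt F z - evenTimeExt F w| ≤ C / 2 ^ q * pnorm (z - w) * pnorm z ^ q := by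
  obtain ⟨t, x⟩ := z
  obtain ⟨s, y⟩ := w
  set r := pnorm (t, x) / 2 with hr_def
  have hr : 0 < r := half_pos (pnorm_pos hz)
  have hd : pnorm ((t, x) - (s, y)) = √|t - s| + |x - y| := by simp [pnorm]
  have hb : ∀ u ∈ uIcc x y, r ≤ pnorm (s, u) := fun u hu => by
    linarith [sub_pnorm_sub_le_pnorm (t := t) (s := s) hu]
  have htime := hFt.abs_evenTimeExt_sub_le (by linarith) hC hr (by linarith) (hb x left_mem_uIcc)
  have hspace := hFx.abs_evenTimeExt_sub_le hFt hq (by linarith) hC hr hb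
  have htrade : r ^ (q - 1) * |t - s| ≤ r ^ q * √|t - s| := by
    have hsq : √|t - s| ≤ r := by linarith [abs_nonneg (x - y)]
    have hsplit : r ^ (q - 1) * |t - s| = r ^ q * √|t - s| * (√|t - s| / r) := by
      rw [Real.rpow_sub_one hr.ne', mul_div_assoc', mul_assoc, Real.mul_self_sqrt (abs_nonneg _)]
      ring
    rw [hsplit]
    exact mul_le_of_le_one_right (by positivity) ((div_le_one hr).mpr hsq)
  calc |evenTimeExt F (t, x) - evenTimeExt F (s, y)|
      ≤ |evenTimeExt F (t, x) - evenTimeExt F (s, x)|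
        + |evenTimeExt F (s, x) - evenTimeExt F (s, y)| := abs_sub_le _ _ _
    _ ≤ C * r ^ (q - 1) * |t - s| + C * r ^ q * |x - y| := add_le_add htime hspace
    _ ≤ C * r ^ q * pnorm ((t, x) - (s, y)) := by
        rw [hd]; nlinarith [mul_le_mul_of_nonneg_left htrade hC]
    _ = C / 2 ^ q * pnorm ((t, x) - (s, y)) * pnorm (t, x) ^ q := by
        rw [hr_def, Real.div_rpow (pnorm_pos hz).le zero_le_two]; ring

end evenTimeExt

theorem stmt18_general (γ : ℝ) (hγ0 : 0 < γ) (F : ℝ × ℝ → ℝ) (C : ℝ) (hC : 0 < C)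
    (hdiffx : ∀ t x : ℝ, t ≠ 0 → DifferentiableAt ℝ (fun y => F (t, y)) x)
    (hdifft : ∀ t x : ℝ, t ≠ 0 → DifferentiableAt ℝ (fun s => F (s, x)) t)
    (hdx : ∀ t x : ℝ, t ≠ 0 →
      |deriv (fun y => F (t, y)) x| ≤ C * pnorm (t, x) ^ (-3 - γ))
    (hdt : ∀ t x : ℝ, t ≠ 0 →
      |deriv (fun s => F (s, x)) t| ≤ C * pnorm (t, x) ^ (-4 - γ)) :
    ∃ Ftil : ℝ × ℝ → ℝ,
      (∀ t x : ℝ, 0 < t → Ftil (t, x) = F (t, x)) ∧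
      (∀ t x : ℝ, t < 0 → Ftil (t, x) = F (-t, x)) ∧
      (∀ x : ℝ, x ≠ 0 → Tendsto (fun t => F (t, x)) (nhdsWithin 0 (Set.Ioi 0))
        (nhds (Ftil (0, x)))) ∧
      ∃ C' : ℝ, 0 < C' ∧ ∀ z w : ℝ × ℝ, z ≠ 0 → w ≠ 0 →
        pnorm (z - w) ≤ pnorm z / 2 →
        |Ftil z - Ftil w| ≤ C' * pnorm (z - w) * pnorm z ^ (-3 - γ) := by
  have hFx : HasSpaceDerivBound F C (-3 - γ) := fun t x ht => ⟨hdiffx t x ht, hdx t x ht⟩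
  have hFt : HasTimeDerivBound F C (-3 - γ - 1) := fun t x ht => by
    rw [show -3 - γ - 1 = -4 - γ by ring]
    exact ⟨hdifft t x ht, hdt t x ht⟩
  refine ⟨evenTimeExt F, fun t x ht => evenTimeExt_of_pos x ht,
    fun t x ht => evenTimeExt_of_neg x ht,
    fun x hx => hFt.tendsto_evenTimeExt_zero (by linarith) hC.le hx,
    C / 2 ^ (-3 - γ), by positivity,
    fun z w hz _ hzw => abs_evenTimeExt_sub_le (by linarith) hC.le hFx hFt hz hzw⟩

/-- Let `F = ∂ₓ^γ K'` satisfy, for `t ≠ 0`, the derivative bounds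
`|∂ₓF(z)| ≲ ‖z‖^{-3-γ}` and `|∂ₜF(z)| ≲ ‖z‖^{-4-γ}`.  Then for every `x ≠ 0` the limit
`F(0+,x) = lim_{t↓0} F(t,x)` exists, and the even-in-`t` extension `F̃` satisfies
`|F̃(z) - F̃(w)| ≲ ‖z-w‖ ‖z‖^{-3-γ}` whenever `‖z-w‖ ≤ ‖z‖/2`. -/
theorem stmt18 (γ : ℝ) (hγ0 : 0 < γ) (hγ1 : γ < 1) (F : ℝ × ℝ → ℝ) (C : ℝ) (hC : 0 < C)
    (hdiffx : ∀ t x : ℝ, t ≠ 0 → DifferentiableAt ℝ (fun y => F (t, y)) x)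
    (hdifft : ∀ t x : ℝ, t ≠ 0 → DifferentiableAt ℝ (fun s => F (s, x)) t)
    (hdx : ∀ t x : ℝ, t ≠ 0 →
      |deriv (fun y => F (t, y)) x| ≤ C * pnorm (t, x) ^ (-3 - γ))
    (hdt : ∀ t x : ℝ, t ≠ 0 →
      |deriv (fun s => F (s, x)) t| ≤ C * pnorm (t, x) ^ (-4 - γ)) :
    ∃ Ftil : ℝ × ℝ → ℝ,
      (∀ t x : ℝ, 0 < t → Ftil (t, x) = F (t, x)) ∧
      (∀ t x : ℝ, t < 0 → Ftil (t, x) = F (-t, x)) ∧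
      (∀ x : ℝ, x ≠ 0 → Tendsto (fun t => F (t, x)) (nhdsWithin 0 (Set.Ioi 0))
        (nhds (Ftil (0, x)))) ∧
      ∃ C' : ℝ, 0 < C' ∧ ∀ z w : ℝ × ℝ, z ≠ 0 → w ≠ 0 →
        pnorm (z - w) ≤ pnorm z / 2 →
        |Ftil z - Ftil w| ≤ C' * pnorm (z - w) * pnorm z ^ (-3 - γ) :=
  stmt18_general γ hγ0 F C hC hdiffx hdifft hdx hdt
end
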